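/- Let D be a Dedekind domain that is not a field, O an order in D, and f the conductor of O in D. Let g ∈ Cl(O) and suppose that the set of prime ideals p of O coprime to f whose class in Cl(O) equals g is infinite (all such p are invertible as fractional ideals of O). Then for every prime ideal p of O coprime to f with class g, the class h = [p·D] ∈ Cl(D) (which depends only on g) contains infinitely many nonzero prime ideals of D coprime to f; that is, the set of nonzero prime ideals P of D with P + f = D and class h is infinite. -/

import Mathlib

open scoped nonZeroDivisors

/-- The conductor `f = {a ∈ D | a·D ⊆ O}` of a subring `O` of `D`, as an ideal of `D`. -/
def conductorIdeal {D : Type*} [CommRing D] (O : Subring D) : Ideal D where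
  carrier := {a | ∀ d : D, a * d ∈ O}
  add_mem' := by
    intro a b ha hb d
    simpa [add_mul] using O.add_mem (ha d) (hb d)
  zero_mem' := by
    intro d
    simpa using O.zero_mem
  smul_mem' := by
    intro c a ha d
    have h := ha (c * d)
    have e : c • a * d = a * (c * d) := by rw [smul_eq_mul]; ring
    rw [e]; exact h

/-- The conductor of the subring `O` of `D`, viewed as an ideal of `O`
(the conductor is contained in `O`). -/
def conductorIdealO {D : Type*} [CommRing D] (O : Subring D) : Ideal O :=
  (conductorIdeal O).comap O.subtype

/-- `O` is an order in the Dedekind domain `D`: a subring such that the fraction field of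
`D` is also a fraction field of `O` (every element is a quotient of two elements of `O`)
and such that `D` is a finitely generated `O`-module. -/
def Subring.IsOrder {D : Type*} [CommRing D] [IsDomain D] (O : Subring D) : Prop :=
  (∀ x : FractionRing D, ∃ a b : O,
      b ≠ 0 ∧ x = algebraMap D (FractionRing D) a / algebraMap D (FractionRing D) b) ∧
    Module.Finite O D

/-!
If `p + f = O`, write `1 = a + c` with `a ∈ p` and `c` in the conductor. Since `c·D ⊆ O`,
every `d ∈ D` is congruent to `c·d ∈ O` modulo `p·D`, and `(p·D)·c ⊆ p`; hence `p·D ∩ O = p`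
and `O/p ≅ D/p·D`. So `p ↦ p·D` is injective on primes coprime to `f`, sends them to primes
coprime to `f`, and sends ideals with equal classes in `Cl(O)` to ideals with equal classes
in `Cl(D)`: it maps the infinitely many primes of class `g` into the primes of class `[p·D]`.
-/

namespace Subring

variable {D : Type*} [CommRing D] {O : Subring D} {p : Ideal O}

lemma exists_mem_add_mem_conductor_eq_one (hp : p ⊔ conductorIdealO O = ⊤) :
    ∃ a ∈ p, ∃ c ∈ conductorIdealO O, a + c = 1 :=
  Ideal.isCoprime_iff_exists.mp (Ideal.isCoprime_iff_sup_eq.mpr hp)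

lemma exists_mem_eq_mul_of_mem_conductor {y c : D} (hy : y ∈ p.map O.subtype)
    (hc : c ∈ conductorIdeal O) : ∃ x ∈ p, (x : D) = y * c := by
  induction hy using Submodule.span_induction generalizing c with
  | mem y hy =>
    obtain ⟨q, hq, rfl⟩ := hy
    exact ⟨q * ⟨c, by simpa using hc 1⟩, p.mul_mem_right _ hq, rfl⟩
  | zero => exact ⟨0, p.zero_mem, by simp⟩
  | add y z _ _ ihy ihz =>
    obtain ⟨x, hx, hxy⟩ := ihy hc
    obtain ⟨w, hw, hwz⟩ := ihz hc
    exact ⟨x + w, p.add_mem hx hw, by push_cast; rw [hxy, hwz, add_mul]⟩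
  | smul d y _ ih =>
    obtain ⟨x, hx, hxy⟩ := ih ((conductorIdeal O).mul_mem_left d hc)
    exact ⟨x, hx, by rw [hxy, smul_eq_mul]; ring⟩

lemma comap_map_subtype_of_sup_conductor_eq_top (hp : p ⊔ conductorIdealO O = ⊤) :
    (p.map O.subtype).comap O.subtype = p := by
  refine le_antisymm (fun x hx ↦ ?_) Ideal.le_comap_map
  obtain ⟨a, ha, c, hc, hac⟩ := exists_mem_add_mem_conductor_eq_one hp
  obtain ⟨xc, hxc, hxc_eq⟩ := exists_mem_eq_mul_of_mem_conductor hx hc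
  have : x = x * a + xc := by
    rw [show xc = x * c from Subtype.ext hxc_eq, ← mul_add, hac, mul_one]
  rw [this]
  exact p.add_mem (p.mul_mem_left x ha) hxc

lemma map_subtype_injOn :
    Set.InjOn (·.map O.subtype) {p : Ideal O | p ⊔ conductorIdealO O = ⊤} := fun _ hp _ hq h ↦ by
  rw [← comap_map_subtype_of_sup_conductor_eq_top hp,
    ← comap_map_subtype_of_sup_conductor_eq_top hq]
  exact congrArg _ h

lemma surjective_quotientMk_map_comp_subtype (hp : p ⊔ conductorIdealO O = ⊤) :
    Function.Surjective ((Ideal.Quotient.mk (p.map O.subtype)).comp O.subtype) := by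
  obtain ⟨a, ha, c, hc, hac⟩ := exists_mem_add_mem_conductor_eq_one hp
  have hac' : (a : D) + c = 1 := by simpa using congrArg Subtype.val hac
  refine Ideal.Quotient.mk_surjective.forall.mpr fun d ↦ ⟨⟨c * d, hc d⟩, ?_⟩
  rw [RingHom.comp_apply, Ideal.Quotient.eq]
  change (c : D) * d - d ∈ p.map O.subtype
  rw [show (c : D) * d - d = -(a * d) by linear_combination d * hac']
  exact neg_mem ((p.map O.subtype).mul_mem_right d (Ideal.mem_map_of_mem O.subtype ha))

noncomputable def quotientEquivQuotientMap (hp : p ⊔ conductorIdealO O = ⊤) :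
    O ⧸ p ≃+* D ⧸ p.map O.subtype :=
  (Ideal.quotEquivOfEq (by
      rw [← RingHom.comap_ker, Ideal.mk_ker, comap_map_subtype_of_sup_conductor_eq_top hp])).trans
    (RingHom.quotientKerEquivOfSurjective (surjective_quotientMk_map_comp_subtype hp))

lemma isPrime_map_subtype (hp : p.IsPrime) (hpf : p ⊔ conductorIdealO O = ⊤) :
    (p.map O.subtype).IsPrime :=
  (Ideal.Quotient.isDomain_iff_prime _).mp <|
    (quotientEquivQuotientMap hpf).symm.toMulEquiv.isDomain (O ⧸ p)

lemma map_subtype_sup_conductor_eq_top (hp : p ⊔ conductorIdealO O = ⊤) :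
    p.map O.subtype ⊔ conductorIdeal O = ⊤ := by
  obtain ⟨a, ha, c, hc, hac⟩ := exists_mem_add_mem_conductor_eq_one hp
  rw [Ideal.eq_top_iff_one, ← Subring.coe_one, ← hac, Subring.coe_add]
  exact Submodule.add_mem_sup (Ideal.mem_map_of_mem O.subtype ha) hc

lemma map_subtype_mem_nonZeroDivisors [IsDomain D] (hpf : p ⊔ conductorIdealO O = ⊤)
    (hpu : IsUnit (p : FractionalIdeal O⁰ (FractionRing O))) :
    p.map O.subtype ∈ (Ideal D)⁰ := by
  rw [mem_nonZeroDivisors_iff_ne_zero]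
  intro h
  rw [← comap_map_subtype_of_sup_conductor_eq_top hpf, h, Ideal.zero_eq_bot,
    Ideal.comap_bot_of_injective O.subtype Subtype.coe_injective,
    FractionalIdeal.coeIdeal_bot] at hpu
  exact not_isUnit_zero hpu

lemma classGroup_mk0_map_subtype_eq [IsDedekindDomain D] {q : Ideal O}
    {hpu : IsUnit (p : FractionalIdeal O⁰ (FractionRing O))}
    {hqu : IsUnit (q : FractionalIdeal O⁰ (FractionRing O))}
    (h : ClassGroup.mk (FractionRing O) hpu.unit = ClassGroup.mk (FractionRing O) hqu.unit)
    (hp : p.map O.subtype ∈ (Ideal D)⁰) (hq : q.map O.subtype ∈ (Ideal D)⁰) :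
    ClassGroup.mk0 ⟨p.map O.subtype, hp⟩ = ClassGroup.mk0 ⟨q.map O.subtype, hq⟩ := by
  obtain ⟨x, y, hx, hy, hxy⟩ :=
    (ClassGroup.mk_eq_mk_of_coe_ideal hpu.unit_spec hqu.unit_spec).mp h
  refine ClassGroup.mk0_eq_mk0_iff.mpr ⟨x, y, by simpa using hx, by simpa using hy, ?_⟩
  simpa only [Ideal.map_mul, Ideal.map_span, Set.image_singleton, Subring.coe_subtype] using
    congrArg (Ideal.map O.subtype) hxy

end Subring

open Subring in
theorem infinitely_many_primes_in_extended_class_general {D : Type*} [CommRing D]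
    [IsDedekindDomain D] (O : Subring D)
    (g : ClassGroup O)
    (hg : {p : Ideal O | p.IsPrime ∧ p ⊔ conductorIdealO O = ⊤ ∧
      ∃ hp : IsUnit ((p : Ideal O) : FractionalIdeal (↥O)⁰ (FractionRing ↥O)),
        ClassGroup.mk (FractionRing ↥O) hp.unit = g}.Infinite) :
    ∀ p : Ideal O, p.IsPrime → p ⊔ conductorIdealO O = ⊤ →
      (∃ hp : IsUnit ((p : Ideal O) : FractionalIdeal (↥O)⁰ (FractionRing ↥O)),
        ClassGroup.mk (FractionRing ↥O) hp.unit = g) →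
      ∀ hm : p.map O.subtype ∈ (Ideal D)⁰,
        {P : (Ideal D)⁰ | (P : Ideal D).IsPrime ∧ (P : Ideal D) ⊔ conductorIdeal O = ⊤ ∧
          ClassGroup.mk0 P = ClassGroup.mk0 ⟨p.map O.subtype, hm⟩}.Infinite := by
  rintro p - - ⟨hpu, rfl⟩ hm
  refine Set.Infinite.of_image Subtype.val <|
    (hg.image (map_subtype_injOn.mono fun q hq ↦ hq.2.1)).mono ?_
  rintro _ ⟨q, ⟨hq, hqf, hqu, hqg⟩, rfl⟩
  exact ⟨⟨_, map_subtype_mem_nonZeroDivisors hqf hqu⟩,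
    ⟨isPrime_map_subtype hq hqf, map_subtype_sup_conductor_eq_top hqf,
      classGroup_mk0_map_subtype_eq hqg _ _⟩, rfl⟩

/-- **Lemma 4.1(2).** Let `O` be an order in a Dedekind domain `D` with conductor `f`, and
let `g ∈ Cl(O)` be a class containing infinitely many (invertible) prime ideals of `O`
coprime to `f`. Then for every prime `p` of `O` coprime to `f` with class `g`, the class
`h = [p·D] ∈ Cl(D)` contains infinitely many nonzero prime ideals of `D` coprime to `f`. -/
theorem infinitely_many_primes_in_extended_class {D : Type*} [CommRing D]
    [IsDedekindDomain D] (hD : ¬ IsField D) (O : Subring D) (hO : O.IsOrder)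
    (g : ClassGroup O)
    (hg : {p : Ideal O | p.IsPrime ∧ p ⊔ conductorIdealO O = ⊤ ∧
      ∃ hp : IsUnit ((p : Ideal O) : FractionalIdeal (↥O)⁰ (FractionRing ↥O)),
        ClassGroup.mk (FractionRing ↥O) hp.unit = g}.Infinite) :
    ∀ p : Ideal O, p.IsPrime → p ⊔ conductorIdealO O = ⊤ →
      (∃ hp : IsUnit ((p : Ideal O) : FractionalIdeal (↥O)⁰ (FractionRing ↥O)),
        ClassGroup.mk (FractionRing ↥O) hp.unit = g) →
      ∀ hm : p.map O.subtype ∈ (Ideal D)⁰,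
        {P : (Ideal D)⁰ | (P : Ideal D).IsPrime ∧ (P : Ideal D) ⊔ conductorIdeal O = ⊤ ∧
          ClassGroup.mk0 P = ClassGroup.mk0 ⟨p.map O.subtype, hm⟩}.Infinite :=
  infinitely_many_primes_in_extended_class_general O g hg
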